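/- Let ω = (ω₁, ω₂) ∈ ℝ² with 0 < ω₂ < ω₁ and α = ω₂/ω₁ irrational. Then ω is a Bryuno vector (i.e. B(ω) = Σ_{n≥0} 2^{-n} log(1/α_n(ω)) < ∞) if and only if D(ω) := Σ_{n=0}^∞ (log q_{n+1})/q_n < ∞, where (q_n) are the denominators of the convergents of α. -/

import Mathlib

/-- `alphan2 ω n = inf { |ω·ν| : ν ∈ ℤ², 0 < |ν₁|+|ν₂| ≤ 2^n }`. -/
noncomputable def alphan2 (ω : ℝ × ℝ) (n : ℕ) : ℝ :=
  sInf {x : ℝ | ∃ ν : ℤ × ℤ, ν ≠ 0 ∧ |ν.1| + |ν.2| ≤ 2 ^ n ∧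
    x = |ω.1 * (ν.1 : ℝ) + ω.2 * (ν.2 : ℝ)|}

/-!
Write `ω = ω₁ • (1, v)` with `v = ω₂ / ω₁ ∈ (0, 1)`; then `α_n(ω) = ω₁ α_n(1, v)`, and the
factor `ω₁` changes the terms of `B` only by the convergent series `2⁻ⁿ log ω₁`.

Let `m = m(n)` be the index with `q_m ≤ 2ⁿ < q_{m+1}`. By the best-approximation property of
the convergents, `α_n(1, v) ≥ |v q_m - p_m| ≥ 1 / (2 q_{m+1})`; on the other hand the lattice vector
`(-p_m, q_m)` has length at most `2 q_m ≤ 2ⁿ⁺¹`, so `α_{n+1}(1, v) ≤ |v q_m - p_m| ≤ 1 / q_{m+1}`.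
Hence `B(ω) < ∞` if and only if `Σ 2⁻ⁿ log q_{m(n)+1} < ∞`.

Finally, the `n` with `m(n) = k` satisfy `2ⁿ ≥ q_k`, so their weights `2⁻ⁿ` add up to at most
`2 / q_k`. Conversely, charge each `k` to the `n` with `2ⁿ⁻¹ < q_k ≤ 2ⁿ`: then `k ≤ m(n)` and
`1 / q_k < 2 · 2⁻ⁿ`, and since `q_{k+2} ≥ 2 q_k` at most two indices `k` are charged to one `n`.
-/

open Finset

theorem summable_of_sum_fiber_le {ι κ : Type*} {a : ι → ℝ} {b : κ → ℝ} (g : ι → κ) (ha : 0 ≤ a)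
    (hb : Summable b) (hfib : ∀ k (s : Finset ι), (∀ i ∈ s, g i = k) → ∑ i ∈ s, a i ≤ b k) :
    Summable a := by
  classical
  have hb0 : 0 ≤ b := fun k => by simpa using hfib k ∅ (by simp)
  refine summable_of_sum_le (c := ∑' k, b k) ha fun s => ?_
  calc ∑ i ∈ s, a i = ∑ k ∈ s.image g, ∑ i ∈ s with g i = k, a i :=
        (sum_fiberwise_of_maps_to (fun i hi => mem_image_of_mem g hi) a).symm
    _ ≤ ∑ k ∈ s.image g, b k := sum_le_sum fun k _ => hfib k _ fun i hi => (mem_filter.1 hi).2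
    _ ≤ ∑' k, b k := hb.sum_le_tsum _ fun k _ => hb0 k

theorem sum_half_pow_le_two_div {x : ℝ} (hx : 0 < x) (s : Finset ℕ) (hs : ∀ n ∈ s, x ≤ 2 ^ n) :
    ∑ n ∈ s, (1 / 2 : ℝ) ^ n ≤ 2 / x := by
  rcases s.eq_empty_or_nonempty with rfl | hne
  · simp only [sum_empty]; positivity
  calc ∑ n ∈ s, (1 / 2 : ℝ) ^ n ≤ ∑ n ∈ Ico (s.min' hne) (s.max' hne + 1), (1 / 2 : ℝ) ^ n :=
        sum_le_sum_of_subset_of_nonneg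
          (fun n hn => mem_Ico.2 ⟨s.min'_le n hn, Nat.lt_succ_of_le (s.le_max' n hn)⟩)
          fun _ _ _ => by positivity
    _ ≤ (1 / 2) ^ s.min' hne / (1 - 1 / 2) := geom_sum_Ico_le_of_lt_one (by norm_num) (by norm_num)
    _ = 2 / 2 ^ s.min' hne := by rw [one_div_pow]; field_simp; norm_num
    _ ≤ 2 / x := by gcongr; exact hs _ (s.min'_mem hne)

theorem exists_le_two_pow_lt_two_mul {x : ℝ} (hx : 1 ≤ x) : ∃ n : ℕ, x ≤ 2 ^ n ∧ 2 ^ n < 2 * x := by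
  classical
  have hex : ∃ n : ℕ, x ≤ 2 ^ n := (pow_unbounded_of_one_lt x one_lt_two).imp fun _ => le_of_lt
  refine ⟨Nat.find hex, Nat.find_spec hex, ?_⟩
  rcases h : Nat.find hex with _ | n
  · linarith [pow_zero (2 : ℝ)]
  · have := Nat.find_min hex (by omega : n < Nat.find hex)
    rw [pow_succ]
    linarith

theorem summable_half_pow_mul_iff_of_le {f g : ℕ → ℝ} (hf : 0 ≤ f) (hg : 0 ≤ g) {c : ℝ}
    (hfg : ∀ n, f n ≤ g (n + 1)) (hgf : ∀ n, g n ≤ f n + c) :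
    Summable (fun n => (1 / 2 : ℝ) ^ n * f n) ↔ Summable (fun n => (1 / 2 : ℝ) ^ n * g n) := by
  constructor
  · intro hsum
    refine .of_nonneg_of_le (fun n => mul_nonneg (by positivity) (hg n)) (fun n => ?_)
      (hsum.add (summable_geometric_two.mul_left c))
    have := mul_le_mul_of_nonneg_left (hgf n) (by positivity : (0 : ℝ) ≤ (1 / 2) ^ n)
    simp only [one_div, inv_pow] at this ⊢
    linarith
  · intro hsum
    refine .of_nonneg_of_le (fun n => mul_nonneg (by positivity) (hf n)) (fun n => ?_)
      (((summable_nat_add_iff 1).2 hsum).mul_left 2)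
    have := mul_le_mul_of_nonneg_left (hfg n) (by positivity : (0 : ℝ) ≤ (1 / 2) ^ n)
    rw [pow_succ]
    linarith

section DyadicIndex

variable {q : ℕ → ℝ}

/-- The index `m(n)` of the header: for `q` unbounded with `q 0 = 1`, it satisfies
`q m ≤ 2 ^ n < q (m + 1)`. -/
noncomputable def dyadicIndex (q : ℕ → ℝ) (n : ℕ) : ℕ :=
  sInf {m | 2 ^ n < q (m + 1)}

theorem two_pow_le_of_two_mul_le (hq0 : q 0 = 1) (hgrow : ∀ k, 2 * q k ≤ q (k + 2)) (j : ℕ) :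
    2 ^ j ≤ q (2 * j) := by
  induction j with
  | zero => simp [hq0]
  | succ j ih => rw [pow_succ, mul_add_one]; linarith [hgrow (2 * j)]

theorem pow_lt_dyadicIndex_succ (hq0 : q 0 = 1) (hgrow : ∀ k, 2 * q k ≤ q (k + 2)) (n : ℕ) :
    2 ^ n < q (dyadicIndex q n + 1) :=
  Nat.sInf_mem (s := {m | 2 ^ n < q (m + 1)}) ⟨2 * n + 1, by
    have := two_pow_le_of_two_mul_le hq0 hgrow (n + 1)
    rw [pow_succ, mul_add_one] at this
    simp only [Set.mem_ofPred_eq]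
    linarith [pow_pos (two_pos (α := ℝ)) n]⟩

theorem dyadicIndex_le_pow (hq0 : q 0 = 1) (n : ℕ) : q (dyadicIndex q n) ≤ 2 ^ n := by
  rcases h : dyadicIndex q n with _ | m
  · rw [hq0]; exact one_le_pow₀ one_le_two
  · exact not_lt.1 (Nat.notMem_of_lt_sInf (h ▸ m.lt_succ_self : m < dyadicIndex q n))

theorem le_dyadicIndex_of_le_pow (hq0 : q 0 = 1) (hq : Monotone q)
    (hgrow : ∀ k, 2 * q k ≤ q (k + 2)) {k n : ℕ} (h : q k ≤ 2 ^ n) : k ≤ dyadicIndex q n := by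
  by_contra! hlt
  linarith [hq (Nat.succ_le_of_lt hlt), pow_lt_dyadicIndex_succ hq0 hgrow n]

theorem card_le_two_of_le_lt_two_mul (hq : Monotone q) (hgrow : ∀ k, 2 * q k ≤ q (k + 2))
    {x : ℝ} {s : Finset ℕ} (hs : ∀ k ∈ s, q k ≤ x ∧ x < 2 * q k) : s.card ≤ 2 := by
  rcases s.eq_empty_or_nonempty with rfl | hne
  · simp
  have hclose : ∀ k ∈ s, k ≤ s.min' hne + 1 := by
    intro k hk
    by_contra! hlt
    linarith [(hs _ (s.min'_mem hne)).2, (hs k hk).1, hgrow (s.min' hne),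
      hq (show s.min' hne + 2 ≤ k by omega)]
  calc s.card ≤ (Icc (s.min' hne) (s.min' hne + 1)).card :=
        card_le_card fun k hk => mem_Icc.2 ⟨s.min'_le k hk, hclose k hk⟩
    _ = 2 := by rw [Nat.card_Icc]; omega

theorem div_le_two_mul_half_pow_mul_dyadicIndex (hq0 : q 0 = 1) (hq : Monotone q)
    (hgrow : ∀ k, 2 * q k ≤ q (k + 2)) {L : ℕ → ℝ} (hL0 : 0 ≤ L) (hL : Monotone L) {k n : ℕ}
    (hle : q k ≤ 2 ^ n) (hlt : 2 ^ n < 2 * q k) :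
    L k / q k ≤ 2 * ((1 / 2) ^ n * L (dyadicIndex q n)) :=
  calc L k / q k ≤ L (dyadicIndex q n) / (2 ^ n / 2) := by
        gcongr
        · exact hL0 _
        · exact hL (le_dyadicIndex_of_le_pow hq0 hq hgrow hle)
        · linarith
    _ = 2 * ((1 / 2) ^ n * L (dyadicIndex q n)) := by rw [one_div_pow]; field_simp

theorem summable_div_of_summable_half_pow_mul_dyadicIndex (hq0 : q 0 = 1) (hq : Monotone q)
    (hgrow : ∀ k, 2 * q k ≤ q (k + 2)) {L : ℕ → ℝ} (hL0 : 0 ≤ L) (hL : Monotone L)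
    (hsum : Summable (fun n => (1 / 2 : ℝ) ^ n * L (dyadicIndex q n))) :
    Summable (fun k => L k / q k) := by
  have hq1 (k : ℕ) : 1 ≤ q k := hq0 ▸ hq k.zero_le
  choose N hN using fun k => exists_le_two_pow_lt_two_mul (hq1 k)
  refine summable_of_sum_fiber_le N (fun k => div_nonneg (hL0 k) (zero_le_one.trans (hq1 k)))
    (hsum.mul_left 4) fun n s hs => ?_
  have hN' : ∀ k ∈ s, q k ≤ 2 ^ n ∧ 2 ^ n < 2 * q k := fun k hk => hs k hk ▸ hN k
  calc ∑ k ∈ s, L k / q k ≤ ∑ k ∈ s, 2 * ((1 / 2) ^ n * L (dyadicIndex q n)) :=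
        sum_le_sum fun k hk =>
          div_le_two_mul_half_pow_mul_dyadicIndex hq0 hq hgrow hL0 hL (hN' k hk).1 (hN' k hk).2
    _ = s.card * (2 * ((1 / 2) ^ n * L (dyadicIndex q n))) := by rw [sum_const, nsmul_eq_mul]
    _ ≤ 2 * (2 * ((1 / 2) ^ n * L (dyadicIndex q n))) := by
        gcongr
        · exact mul_nonneg zero_le_two (mul_nonneg (by positivity) (hL0 _))
        · exact_mod_cast card_le_two_of_le_lt_two_mul hq hgrow hN'
    _ = 4 * ((1 / 2) ^ n * L (dyadicIndex q n)) := by ring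

theorem summable_half_pow_mul_dyadicIndex_of_summable_div (hq0 : q 0 = 1) (hq : Monotone q)
    {L : ℕ → ℝ} (hL0 : 0 ≤ L) (hsum : Summable (fun k => L k / q k)) :
    Summable (fun n => (1 / 2 : ℝ) ^ n * L (dyadicIndex q n)) := by
  refine summable_of_sum_fiber_le (dyadicIndex q) (fun n => mul_nonneg (by positivity) (hL0 _))
    (hsum.mul_left 2) fun k s hs => ?_
  have hqk : 0 < q k := one_pos.trans_le (hq0 ▸ hq k.zero_le)
  calc ∑ n ∈ s, (1 / 2 : ℝ) ^ n * L (dyadicIndex q n) = (∑ n ∈ s, (1 / 2 : ℝ) ^ n) * L k := by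
        rw [sum_mul]; exact sum_congr rfl fun n hn => by rw [hs n hn]
    _ ≤ 2 / q k * L k := by
        gcongr
        · exact hL0 k
        · exact sum_half_pow_le_two_div hqk s fun n hn => hs n hn ▸ dyadicIndex_le_pow hq0 n
    _ = 2 * (L k / q k) := by ring

theorem summable_half_pow_mul_dyadicIndex_iff (hq0 : q 0 = 1) (hq : Monotone q)
    (hgrow : ∀ k, 2 * q k ≤ q (k + 2)) {L : ℕ → ℝ} (hL0 : 0 ≤ L) (hL : Monotone L) :
    Summable (fun n => (1 / 2 : ℝ) ^ n * L (dyadicIndex q n)) ↔ Summable (fun k => L k / q k) :=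
  ⟨summable_div_of_summable_half_pow_mul_dyadicIndex hq0 hq hgrow hL0 hL,
    summable_half_pow_mul_dyadicIndex_of_summable_div hq0 hq hL0⟩

end DyadicIndex

theorem abs_le_abs_int_mul_add_int_mul {e₀ e₁ : ℝ} (he : e₀ * e₁ ≤ 0) {X Y q₀ q₁ : ℤ}
    (hq₀ : 0 < q₀) (hq₁ : 0 < q₁) (hpos : 0 < X * q₀ + Y * q₁) (hlt : X * q₀ + Y * q₁ < q₁) :
    |e₀| ≤ |X * e₀ + Y * e₁| := by
  have hX : X ≠ 0 := by
    rintro rfl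
    have : 0 < Y := by nlinarith
    nlinarith
  have hXY : X * Y ≤ 0 := by
    by_contra! hXY
    rcases hX.lt_or_gt with hX | hX
    · nlinarith [neg_of_mul_pos_right hXY hX.le]
    · nlinarith [pos_of_mul_pos_right hXY hX.le]
  have hsame : 0 ≤ (X * e₀) * (Y * e₁) := by
    have : (X : ℝ) * Y ≤ 0 := by exact_mod_cast hXY
    nlinarith [mul_nonneg_of_nonpos_of_nonpos this he]
  calc |e₀| ≤ |(X : ℝ)| * |e₀| :=
        le_mul_of_one_le_left (abs_nonneg _) (by exact_mod_cast Int.one_le_abs hX)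
    _ ≤ |X * e₀| + |Y * e₁| := by rw [abs_mul]; exact le_add_of_nonneg_right (abs_nonneg _)
    _ = |X * e₀ + Y * e₁| := ((abs_add_eq_add_abs_iff _ _).2 (mul_nonneg_iff.1 hsame)).symm

namespace GenContFract

variable {v : ℝ}

theorem not_terminatedAt_of_irrational (hv : Irrational v) (n : ℕ) :
    ¬(GenContFract.of v).TerminatedAt n := by
  intro h
  obtain ⟨q, rfl⟩ := (terminates_iff_rat v).1 ⟨n, h⟩
  exact hv ⟨q, rfl⟩

theorem exists_s_get?_eq_of_irrational (hv : Irrational v) (n : ℕ) :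
    ∃ gp, (GenContFract.of v).s.get? n = some gp ∧ gp.a = 1 ∧ 1 ≤ gp.b ∧ ∃ z : ℤ, gp.b = z := by
  obtain ⟨gp, hgp⟩ := Option.ne_none_iff_exists'.1 (not_terminatedAt_of_irrational hv n)
  obtain ⟨z, hz⟩ := exists_int_eq_of_partDen (partDen_eq_s_b hgp)
  exact ⟨gp, hgp, of_partNum_eq_one (partNum_eq_s_a hgp),
    of_one_le_get?_partDen (partDen_eq_s_b hgp), z, hz⟩

theorem exists_int_eq_nums_and_dens (hv : Irrational v) (n : ℕ) :
    (∃ p : ℤ, (GenContFract.of v).nums n = p) ∧ ∃ q : ℤ, (GenContFract.of v).dens n = q := by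
  induction n using Nat.strong_induction_on with
  | _ n ih =>
    match n with
    | 0 => exact ⟨⟨⌊v⌋, by rw [zeroth_num_eq_h, of_h_eq_floor]⟩, ⟨1, by simp⟩⟩
    | 1 =>
      obtain ⟨gp, hgp, ha, -, z, hb⟩ := exists_s_get?_eq_of_irrational hv 0
      exact ⟨⟨z * ⌊v⌋ + 1, by rw [first_num_eq hgp, ha, of_h_eq_floor, hb]; push_cast; ring⟩,
        ⟨z, by rw [first_den_eq hgp, hb]⟩⟩
    | n + 2 =>
      obtain ⟨⟨p₀, hp₀⟩, ⟨q₀, hq₀⟩⟩ := ih n (by omega)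
      obtain ⟨⟨p₁, hp₁⟩, ⟨q₁, hq₁⟩⟩ := ih (n + 1) (by omega)
      obtain ⟨gp, hgp, ha, -, z, hb⟩ := exists_s_get?_eq_of_irrational hv (n + 1)
      exact ⟨⟨z * p₁ + p₀, by rw [nums_recurrence hgp hp₀ hp₁, ha, hb]; push_cast; ring⟩,
        ⟨z * q₁ + q₀, by rw [dens_recurrence hgp hq₀ hq₁, ha, hb]; push_cast; ring⟩⟩

theorem monotone_dens (v : ℝ) : Monotone (GenContFract.of v).dens :=
  monotone_nat_of_le_succ fun _ => of_den_mono

theorem one_le_dens_of_irrational (hv : Irrational v) (n : ℕ) : 1 ≤ (GenContFract.of v).dens n :=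
  calc (1 : ℝ) ≤ Nat.fib (n + 1) := mod_cast Nat.fib_pos.2 n.succ_pos
    _ ≤ (GenContFract.of v).dens n :=
      succ_nth_fib_le_of_nth_den (Or.inr (not_terminatedAt_of_irrational hv _))

theorem dens_pos_of_irrational (hv : Irrational v) (n : ℕ) : 0 < (GenContFract.of v).dens n :=
  one_pos.trans_le (one_le_dens_of_irrational hv n)

theorem two_mul_dens_le_dens_add_two (hv : Irrational v) (n : ℕ) :
    2 * (GenContFract.of v).dens n ≤ (GenContFract.of v).dens (n + 2) := by
  obtain ⟨gp, hgp, ha, hb, -⟩ := exists_s_get?_eq_of_irrational hv (n + 1)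
  rw [dens_recurrence hgp rfl rfl, ha]
  nlinarith [of_den_mono (v := v) (n := n), dens_pos_of_irrational hv (n + 1)]

noncomputable def convErr (v : ℝ) (n : ℕ) : ℝ :=
  v * (GenContFract.of v).dens n - (GenContFract.of v).nums n

theorem convErr_eq_dens_mul (hv : Irrational v) (n : ℕ) :
    convErr v n = (GenContFract.of v).dens n * (v - (GenContFract.of v).convs n) := by
  have := (dens_pos_of_irrational hv n).ne'
  rw [convErr, conv_eq_num_div_den]
  field_simp

theorem neg_one_pow_mul_sub_convs_pos (hv : Irrational v) (n : ℕ) :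
    0 < (-1) ^ n * (v - (GenContFract.of v).convs n) := by
  obtain ⟨_, hsucc⟩ := Option.ne_none_iff_exists'.1 <|
    (not_congr of_terminatedAt_n_iff_succ_nth_intFractPair_stream_eq_none).1
      (not_terminatedAt_of_irrational hv n)
  obtain ⟨ifp, hifp, hfr, -⟩ := IntFractPair.succ_nth_stream_eq_some_iff.1 hsucc
  have hB : 0 < ((GenContFract.of v).contsAux (n + 1)).b := by
    rw [← nth_cont_eq_succ_nth_contAux, ← den_eq_conts_b]; exact dens_pos_of_irrational hv n
  have hpB : 0 ≤ ((GenContFract.of v).contsAux n).b := zero_le_of_contsAux_b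
  have hfr : 0 < ifp.fr := (IntFractPair.nth_stream_fr_nonneg hifp).lt_of_ne' hfr
  rw [sub_convs_eq hifp, if_neg hfr.ne', mul_div, ← pow_add, ← two_mul, pow_mul, neg_one_sq,
    one_pow]
  positivity

theorem neg_one_pow_mul_convErr_pos (hv : Irrational v) (n : ℕ) :
    0 < (-1) ^ n * convErr v n := by
  rw [convErr_eq_dens_mul hv, mul_left_comm]
  exact mul_pos (dens_pos_of_irrational hv n) (neg_one_pow_mul_sub_convs_pos hv n)

theorem convErr_mul_convErr_succ_neg (hv : Irrational v) (n : ℕ) :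
    convErr v n * convErr v (n + 1) < 0 := by
  have := mul_pos (neg_one_pow_mul_convErr_pos hv n) (neg_one_pow_mul_convErr_pos hv (n + 1))
  rw [pow_succ] at this
  nlinarith [pow_mul_pow_eq_one n ((by norm_num : (-1 : ℝ) * -1 = 1))]

theorem nums_mul_dens_succ_sub (hv : Irrational v) (n : ℕ) :
    (GenContFract.of v).nums n * (GenContFract.of v).dens (n + 1) -
      (GenContFract.of v).dens n * (GenContFract.of v).nums (n + 1) = (-1) ^ (n + 1) :=
  SimpContFract.determinant (s := SimpContFract.of v) (not_terminatedAt_of_irrational hv n)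

theorem abs_convErr (hv : Irrational v) (n : ℕ) : |convErr v n| = (-1) ^ n * convErr v n := by
  rw [← abs_of_pos (neg_one_pow_mul_convErr_pos hv n), abs_mul, abs_neg_one_pow, one_mul]

theorem dens_mul_abs_convErr_succ_add (hv : Irrational v) (n : ℕ) :
    (GenContFract.of v).dens n * |convErr v (n + 1)| +
      (GenContFract.of v).dens (n + 1) * |convErr v n| = 1 := by
  rw [abs_convErr hv, abs_convErr hv, convErr, convErr]
  linear_combination (-1) ^ (n + 1) * nums_mul_dens_succ_sub hv n +
    pow_mul_pow_eq_one (n + 1) (by norm_num : (-1 : ℝ) * -1 = 1)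

theorem dens_succ_mul_abs_convErr_le_one (hv : Irrational v) (n : ℕ) :
    (GenContFract.of v).dens (n + 1) * |convErr v n| ≤ 1 := by
  have := mul_nonneg (dens_pos_of_irrational hv n).le (abs_nonneg (convErr v (n + 1)))
  linarith [dens_mul_abs_convErr_succ_add hv n]

theorem abs_convErr_le_one (hv : Irrational v) (n : ℕ) : |convErr v n| ≤ 1 := by
  nlinarith [dens_succ_mul_abs_convErr_le_one hv n, one_le_dens_of_irrational hv (n + 1),
    abs_nonneg (convErr v n)]

theorem one_le_two_mul_dens_succ_mul_abs_convErr (hv : Irrational v) (n : ℕ) :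
    1 ≤ 2 * (GenContFract.of v).dens (n + 1) * |convErr v n| := by
  nlinarith [dens_mul_abs_convErr_succ_add hv n, dens_succ_mul_abs_convErr_le_one hv (n + 1),
    two_mul_dens_le_dens_add_two hv n, abs_nonneg (convErr v (n + 1))]

theorem abs_nums_le_dens (hv : Irrational v) (hv1 : |v| < 1) (n : ℕ) :
    |(GenContFract.of v).nums n| ≤ (GenContFract.of v).dens n := by
  obtain ⟨⟨p, hp⟩, ⟨q, hq⟩⟩ := exists_int_eq_nums_and_dens hv n
  have hq1 := one_le_dens_of_irrational hv n
  have hlt : |(GenContFract.of v).nums n| < (GenContFract.of v).dens n + 1 :=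
    calc |(GenContFract.of v).nums n| = |v * (GenContFract.of v).dens n - convErr v n| := by
          rw [convErr, sub_sub_cancel]
      _ ≤ |v| * (GenContFract.of v).dens n + 1 := by
          grw [abs_sub, abs_mul, abs_of_pos (dens_pos_of_irrational hv n), abs_convErr_le_one hv]
      _ < (GenContFract.of v).dens n + 1 := by nlinarith
  rw [hp, hq] at hlt ⊢
  exact_mod_cast Int.lt_add_one_iff.1 (by exact_mod_cast hlt)

theorem abs_convErr_le_abs_mul_sub (hv : Irrational v) (m : ℕ) {a b : ℤ} (hab : a ≠ 0 ∨ b ≠ 0)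
    (hb : |(b : ℝ)| < (GenContFract.of v).dens (m + 1)) : |convErr v m| ≤ |v * b - a| := by
  wlog hb0 : 0 ≤ b generalizing a b
  · have := this (a := -a) (b := -b) (by simpa using hab) (by simpa using hb) (by omega)
    calc |convErr v m| ≤ |v * ((-b : ℤ) : ℝ) - ((-a : ℤ) : ℝ)| := this
      _ = |v * b - a| := by rw [← abs_neg]; push_cast; ring_nf
  rcases hb0.eq_or_lt with rfl | hb0
  · have ha : a ≠ 0 := by simpa using hab
    calc |convErr v m| ≤ 1 := abs_convErr_le_one hv m
      _ ≤ |v * ((0 : ℤ) : ℝ) - a| := by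
          simpa using (by exact_mod_cast Int.one_le_abs ha : (1 : ℝ) ≤ |(a : ℝ)|)
  -- Write `(a, b) = X (pₘ, qₘ) + Y (pₘ₊₁, qₘ₊₁)` (the basis is unimodular). Since `0 < b < qₘ₊₁`,
  -- `X ≠ 0` and `X Y ≤ 0`; the errors alternate in sign, so `X eₘ` and `Y eₘ₊₁` do not cancel.
  obtain ⟨⟨p₀, hp₀⟩, ⟨q₀, hq₀⟩⟩ := exists_int_eq_nums_and_dens hv m
  obtain ⟨⟨p₁, hp₁⟩, ⟨q₁, hq₁⟩⟩ := exists_int_eq_nums_and_dens hv (m + 1)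
  have hdet := nums_mul_dens_succ_sub hv m
  rw [hp₀, hq₀, hp₁, hq₁] at hdet
  have hε : ((-1 : ℝ) ^ (m + 1)) ^ 2 = 1 := by rw [← pow_mul, pow_mul', neg_one_sq, one_pow]
  set X : ℤ := (-1) ^ (m + 1) * (q₁ * a - p₁ * b)
  set Y : ℤ := (-1) ^ (m + 1) * (p₀ * b - q₀ * a)
  have hbXY : X * q₀ + Y * q₁ = b := by
    have : (X * q₀ + Y * q₁ : ℝ) = b := by
      simp only [X, Y]; push_cast; linear_combination (-1) ^ (m + 1) * b * hdet + b * hε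
    exact_mod_cast this
  have hvXY : v * b - a = X * convErr v m + Y * convErr v (m + 1) := by
    simp only [X, Y, convErr, hp₀, hq₀, hp₁, hq₁]; push_cast
    linear_combination (-1) ^ (m + 1) * (a - v * b) * hdet + (a - v * b) * hε
  have hq₀pos : 0 < q₀ := by exact_mod_cast hq₀ ▸ dens_pos_of_irrational hv m
  have hq₁pos : 0 < q₁ := by exact_mod_cast hq₁ ▸ dens_pos_of_irrational hv (m + 1)
  have hbq₁ : b < q₁ := by
    rw [hq₁, abs_of_nonneg (by exact_mod_cast hb0.le)] at hb; exact_mod_cast hb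
  rw [hvXY]
  exact abs_le_abs_int_mul_add_int_mul (convErr_mul_convErr_succ_neg hv m).le hq₀pos hq₁pos
    (hbXY ▸ hb0) (hbXY ▸ hbq₁)

end GenContFract

theorem alphan2_smul {c : ℝ} (hc : 0 ≤ c) (ω : ℝ × ℝ) (n : ℕ) :
    alphan2 (c • ω) n = c * alphan2 ω n := by
  rw [alphan2, alphan2, ← smul_eq_mul, ← Real.sInf_smul_of_nonneg hc]
  congr 1
  ext x
  have hscale (ν : ℤ × ℤ) : |c * ω.1 * ν.1 + c * ω.2 * ν.2| = c * |ω.1 * ν.1 + ω.2 * ν.2| := by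
    rw [mul_assoc, mul_assoc, ← mul_add, abs_mul, abs_of_nonneg hc]
  simp only [Set.mem_smul_set, Set.mem_ofPred_eq, Prod.smul_fst, Prod.smul_snd, smul_eq_mul]
  constructor
  · rintro ⟨ν, hν, hle, rfl⟩
    exact ⟨_, ⟨ν, hν, hle, rfl⟩, (hscale ν).symm⟩
  · rintro ⟨_, ⟨ν, hν, hle, rfl⟩, rfl⟩
    exact ⟨ν, hν, hle, (hscale ν).symm⟩

theorem alphan2_le {ω : ℝ × ℝ} {n : ℕ} {ν : ℤ × ℤ} (hν : ν ≠ 0) (hle : |ν.1| + |ν.2| ≤ 2 ^ n) :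
    alphan2 ω n ≤ |ω.1 * ν.1 + ω.2 * ν.2| :=
  csInf_le ⟨0, by rintro _ ⟨_, -, -, rfl⟩; exact abs_nonneg _⟩ ⟨ν, hν, hle, rfl⟩

theorem le_alphan2 {ω : ℝ × ℝ} {n : ℕ} {x : ℝ}
    (h : ∀ ν : ℤ × ℤ, ν ≠ 0 → |ν.1| + |ν.2| ≤ 2 ^ n → x ≤ |ω.1 * ν.1 + ω.2 * ν.2|) :
    x ≤ alphan2 ω n :=
  le_csInf ⟨_, (1, 0), by simp, by simp [one_le_pow₀], rfl⟩
    fun _ ⟨ν, hν, hle, hx⟩ => hx ▸ h ν hν hle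

theorem alphan2_le_one (v : ℝ) (n : ℕ) : alphan2 (1, v) n ≤ 1 := by
  simpa using alphan2_le (ω := (1, v)) (ν := (1, 0)) (by simp) (by simp [one_le_pow₀])

theorem summable_half_pow_mul_log_alphan2_smul_iff {c : ℝ} (hc : 0 < c) {ω : ℝ × ℝ}
    (hω : ∀ n, 0 < alphan2 ω n) :
    Summable (fun n => (1 / 2 : ℝ) ^ n * Real.log (1 / alphan2 (c • ω) n)) ↔
      Summable (fun n => (1 / 2 : ℝ) ^ n * Real.log (1 / alphan2 ω n)) := by
  refine summable_iff_of_summable_sub <| (summable_geometric_two.mul_right (-Real.log c)).congr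
    fun n => ?_
  simp only [alphan2_smul hc.le, one_div, Real.log_inv, Real.log_mul hc.ne' (hω n).ne']
  ring

section UnitFrequency

open GenContFract

variable {v : ℝ}

theorem abs_convErr_le_alphan2 (hv : Irrational v) {n m : ℕ}
    (h : 2 ^ n < (GenContFract.of v).dens (m + 1)) : |convErr v m| ≤ alphan2 (1, v) n := by
  refine le_alphan2 fun ν hν hle => ?_
  have hν2 : |(ν.2 : ℝ)| < (GenContFract.of v).dens (m + 1) := by
    refine lt_of_le_of_lt ?_ h
    exact_mod_cast (le_add_of_nonneg_left (abs_nonneg ν.1)).trans hle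
  have := abs_convErr_le_abs_mul_sub hv m (a := -ν.1) (b := ν.2) (by
    rw [neg_ne_zero, ← not_and_or]; exact fun h => hν (Prod.ext h.1 h.2)) hν2
  simpa [add_comm] using this

theorem alphan2_le_abs_convErr (hv : Irrational v) (hv1 : |v| < 1) {n k : ℕ}
    (h : 2 * (GenContFract.of v).dens k ≤ 2 ^ n) : alphan2 (1, v) n ≤ |convErr v k| := by
  obtain ⟨⟨p, hp⟩, ⟨q, hq⟩⟩ := exists_int_eq_nums_and_dens hv k
  have hpq := abs_nums_le_dens hv hv1 k
  have hq0 : 0 < q := by exact_mod_cast hq ▸ dens_pos_of_irrational hv k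
  rw [hp, hq] at hpq
  rw [hq] at h
  have hle : |-p| + |q| ≤ 2 ^ n := by
    rw [abs_neg, abs_of_pos hq0]
    exact_mod_cast (show (|p| + q : ℝ) ≤ 2 ^ n by push_cast; linarith)
  simpa [convErr, hp, hq, sub_eq_neg_add] using
    alphan2_le (ω := (1, v)) (ν := (-p, q)) (by simp [hq0.ne']) hle

theorem alphan2_pos (hv : Irrational v) (n : ℕ) : 0 < alphan2 (1, v) n :=
  ((abs_convErr hv _).symm ▸ neg_one_pow_mul_convErr_pos hv _).trans_le <| abs_convErr_le_alphan2 hv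
    (pow_lt_dyadicIndex_succ zeroth_den_eq_one (two_mul_dens_le_dens_add_two hv) n)

theorem log_dens_dyadicIndex_succ_le (hv : Irrational v) (hv1 : |v| < 1) (n : ℕ) :
    Real.log ((GenContFract.of v).dens (dyadicIndex (GenContFract.of v).dens n + 1)) ≤
      Real.log (1 / alphan2 (1, v) (n + 1)) := by
  set m := dyadicIndex (GenContFract.of v).dens n
  have hdens := dens_pos_of_irrational hv (m + 1)
  refine Real.log_le_log hdens ((le_one_div hdens (alphan2_pos hv _)).2 ?_)
  calc alphan2 (1, v) (n + 1) ≤ |convErr v m| := by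
        refine alphan2_le_abs_convErr hv hv1 ?_
        rw [pow_succ']
        gcongr
        exact dyadicIndex_le_pow zeroth_den_eq_one n
    _ ≤ 1 / (GenContFract.of v).dens (m + 1) := by
        rw [le_div_iff₀ hdens]
        linarith [dens_succ_mul_abs_convErr_le_one hv m]

theorem log_one_div_alphan2_le (hv : Irrational v) (n : ℕ) :
    Real.log (1 / alphan2 (1, v) n) ≤
      Real.log ((GenContFract.of v).dens (dyadicIndex (GenContFract.of v).dens n + 1)) +
        Real.log 2 := by
  set m := dyadicIndex (GenContFract.of v).dens n
  have hdens := dens_pos_of_irrational hv (m + 1)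
  rw [← Real.log_mul hdens.ne' two_ne_zero]
  refine Real.log_le_log (one_div_pos.2 (alphan2_pos hv n))
    ((one_div_le (alphan2_pos hv n) (by positivity)).2 ?_)
  calc 1 / ((GenContFract.of v).dens (m + 1) * 2) ≤ |convErr v m| := by
        rw [div_le_iff₀ (by positivity)]
        linarith [one_le_two_mul_dens_succ_mul_abs_convErr hv m]
    _ ≤ alphan2 (1, v) n := abs_convErr_le_alphan2 hv
        (pow_lt_dyadicIndex_succ zeroth_den_eq_one (two_mul_dens_le_dens_add_two hv) n)

theorem summable_half_pow_mul_log_alphan2_iff (hv : Irrational v) (hv1 : |v| < 1) :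
    Summable (fun n => (1 / 2 : ℝ) ^ n * Real.log (1 / alphan2 (1, v) n)) ↔
      Summable (fun n => (1 / 2 : ℝ) ^ n *
        Real.log ((GenContFract.of v).dens (dyadicIndex (GenContFract.of v).dens n + 1))) :=
  (summable_half_pow_mul_iff_of_le (fun _ => Real.log_nonneg (one_le_dens_of_irrational hv _))
    (fun n => Real.log_nonneg (one_le_one_div (alphan2_pos hv n) (alphan2_le_one v n)))
    (log_dens_dyadicIndex_succ_le hv hv1) (log_one_div_alphan2_le hv)).symm

theorem summable_half_pow_mul_log_dens_dyadicIndex_iff (hv : Irrational v) :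
    Summable (fun n => (1 / 2 : ℝ) ^ n *
        Real.log ((GenContFract.of v).dens (dyadicIndex (GenContFract.of v).dens n + 1))) ↔
      Summable (fun k =>
        Real.log ((GenContFract.of v).dens (k + 1)) / (GenContFract.of v).dens k) :=
  summable_half_pow_mul_dyadicIndex_iff (q := (GenContFract.of v).dens)
    (L := fun k => Real.log ((GenContFract.of v).dens (k + 1))) zeroth_den_eq_one (monotone_dens v)
    (two_mul_dens_le_dens_add_two hv) (fun _ => Real.log_nonneg (one_le_dens_of_irrational hv _))
    fun _ _ h =>
      Real.log_le_log (dens_pos_of_irrational hv _) (monotone_dens v (Nat.succ_le_succ h))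

end UnitFrequency

/-- Two-dimensional Bryuno comparison: for `ω = (ω₁, ω₂)` with `0 < ω₂ < ω₁`
and `α = ω₂/ω₁` irrational, `ω` is a Bryuno vector, i.e.
`B(ω) = Σ_n 2^{-n} log(1/α_n(ω)) < ∞`, if and only if
`D(ω) = Σ_n (log q_{n+1})/q_n < ∞`, where `(q_n)` are the denominators of the
continued fraction convergents of `α`. -/
theorem bryuno_iff_classical_bryuno (ω₁ ω₂ : ℝ) (h2 : 0 < ω₂) (h12 : ω₂ < ω₁)
    (hα : Irrational (ω₂ / ω₁)) :
    Summable (fun n : ℕ => (1 / 2 : ℝ) ^ n * Real.log (1 / alphan2 (ω₁, ω₂) n)) ↔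
    Summable (fun n : ℕ =>
      Real.log ((GenContFract.of (ω₂ / ω₁)).dens (n + 1)) /
        (GenContFract.of (ω₂ / ω₁)).dens n) := by
  have hω₁ : 0 < ω₁ := h2.trans h12
  have hv1 : |ω₂ / ω₁| < 1 := by rw [abs_of_pos (div_pos h2 hω₁)]; exact (div_lt_one hω₁).2 h12
  have hω : (ω₁, ω₂) = ω₁ • ((1 : ℝ), ω₂ / ω₁) := by
    ext <;> simp [mul_div_cancel₀ _ hω₁.ne']
  rw [hω, summable_half_pow_mul_log_alphan2_smul_iff hω₁ (alphan2_pos hα),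
    summable_half_pow_mul_log_alphan2_iff hα hv1]
  exact summable_half_pow_mul_log_dens_dyadicIndex_iff hα
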